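/- arXiv:1812.04871 — 2 statements merged into one kernel-verified Lean document; each statement's English description precedes it below -/
import Mathlib

section
/- Let X be an Oppermann–Thomas cluster tilting object of 𝒯. Then X is d-self-perpendicular, i.e. add X = { Y ∈ 𝒯 : Ext^d_𝒯(X,Y) = 0 }. -/
/-!
Common setting (Setup 0.8 of the paper): `k` is an algebraically closed field,
`𝒯` a `k`-linear, Hom-finite, `(d+2)`-angulated category with split idempotents,
`d`-suspension functor `Σ^d` (denoted `S` below, an auto-equivalence), which is
`2d`-Calabi–Yau.  We write `Ext^d_𝒯(X,Y) = 𝒯(X, Σ^d Y)`.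
-/

open CategoryTheory Limits

universe v u

namespace MaxTauRigid

variable {𝒯 : Type u} [Category.{v} 𝒯]

section Additive

variable [Preadditive 𝒯] [HasFiniteBiproducts 𝒯]

instance : HasBinaryBiproducts 𝒯 := hasBinaryBiproducts_of_finite_biproducts 𝒯

/-- `Y ∈ add X`: `Y` is a direct summand of a finite direct sum of copies of `X`. -/
def inAdd (X Y : 𝒯) : Prop :=
  ∃ (n : ℕ) (ι : Y ⟶ ⨁ fun _ : Fin n => X) (π : (⨁ fun _ : Fin n => X) ⟶ Y), ι ≫ π = 𝟙 Y

/-- `X` is indecomposable: it is non-zero, and in any direct sum decomposition of `X`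
one of the two summands is zero. -/
def IsIndec (X : 𝒯) : Prop :=
  ¬ IsZero X ∧ ∀ Y Z : 𝒯, Nonempty (X ≅ Y ⊞ Z) → IsZero Y ∨ IsZero Z

/-- `X` has no non-zero direct summand lying in `add C`. -/
def noSummandIn (C X : 𝒯) : Prop :=
  ∀ Z : 𝒯, inAdd C Z → (∃ (i : Z ⟶ X) (p : X ⟶ Z), i ≫ p = 𝟙 Z) → IsZero Z

variable (S : 𝒯 ≌ 𝒯)

/-- `Ext^d_𝒯(X, Y) = 0`, where `S` is the `d`-suspension functor `Σ^d`;
recall `Ext^d_𝒯(X,Y) = 𝒯(X, Σ^d Y)`. -/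
def extVanish (X Y : 𝒯) : Prop := ∀ f : X ⟶ S.functor.obj Y, f = 0

/-- `X` is `d`-rigid: `Ext^d_𝒯(X,X) = 0`. -/
def IsRigid (X : 𝒯) : Prop := extVanish S X X

/-- `X` is `d`-self-perpendicular: `add X = { Y | Ext^d_𝒯(X,Y) = 0 }` (Definition 0.2). -/
def IsSelfPerp (X : 𝒯) : Prop := ∀ Y : 𝒯, inAdd X Y ↔ extVanish S X Y

/-- `X` is maximal `d`-rigid: `add X = { Y | Ext^d_𝒯(X ⊕ Y, X ⊕ Y) = 0 }` (Definition 0.3). -/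
def IsMaxRigid (X : 𝒯) : Prop := ∀ Y : 𝒯, inAdd X Y ↔ extVanish S (X ⊞ Y) (X ⊞ Y)

end Additive

section Angulated

variable (𝒯) [Preadditive 𝒯] (S : 𝒯 ≌ 𝒯) (d : ℕ)

/-- A candidate `(d+2)`-angle `X₀ → X₁ → ⋯ → X_{d+1} → Σ^d X₀` in `𝒯`:
a chain of `d+1` composable arrows together with a "wrapping" morphism from the last
object to the `d`-suspension of the first one. -/
structure Angle where
  chain : ComposableArrows 𝒯 (d + 1)
  wrap : chain.obj' (d + 1) ⟶ S.functor.obj (chain.obj' 0)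

/-- A `(d+2)`-angulation of `𝒯` (in the sense of Geiss–Keller–Oppermann):
the class of distinguished `(d+2)`-angles, together with the axioms used in the paper:
every morphism extends to a distinguished `(d+2)`-angle, consecutive morphisms in a
distinguished `(d+2)`-angle compose to zero, and distinguished `(d+2)`-angles induce
exact sequences under covariant Hom functors (\[GKO, prop. 2.5(a)]). -/
structure Angulation where
  dist : Set (Angle 𝒯 S d)
  complete : ∀ ⦃X Y : 𝒯⦄ (f : X ⟶ Y), ∃ A ∈ dist,
    ∃ (eX : A.chain.obj' 0 ≅ X) (eY : A.chain.obj' 1 ≅ Y),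
      A.chain.map' 0 1 ≫ eY.hom = eX.hom ≫ f
  comp_zero : ∀ A ∈ dist, ∀ i : ℕ, ∀ _ : i + 2 ≤ d + 1, A.chain.map' i (i + 2) = 0
  comp_zero_last : ∀ A ∈ dist, A.chain.map' d (d + 1) ≫ A.wrap = 0
  comp_zero_wrap : ∀ A ∈ dist, A.wrap ≫ S.functor.map (A.chain.map' 0 1) = 0
  exact_mid : ∀ A ∈ dist, ∀ (W : 𝒯) (i : ℕ), ∀ _ : 1 ≤ i, ∀ _ : i ≤ d,
    ∀ g : W ⟶ A.chain.obj' i, g ≫ A.chain.map' i (i + 1) = 0 →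
      ∃ h : W ⟶ A.chain.obj' (i - 1), h ≫ A.chain.map' (i - 1) i = g
  exact_last : ∀ A ∈ dist, ∀ (W : 𝒯) (g : W ⟶ A.chain.obj' (d + 1)), g ≫ A.wrap = 0 →
    ∃ h : W ⟶ A.chain.obj' d, h ≫ A.chain.map' d (d + 1) = g
  exact_wrap : ∀ A ∈ dist, ∀ (W : 𝒯) (g : W ⟶ S.functor.obj (A.chain.obj' 0)),
    g ≫ S.functor.map (A.chain.map' 0 1) = 0 →
      ∃ h : W ⟶ A.chain.obj' (d + 1), h ≫ A.wrap = g

variable {𝒯 S d}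

/-- `X` is an Oppermann–Thomas cluster tilting object (Definition 0.1): `X` is `d`-rigid
and every `Y ∈ 𝒯` admits a distinguished `(d+2)`-angle
`X_d → ⋯ → X_0 → Y → Σ^d X_d` with all `X_i ∈ add X`. -/
def IsClusterTilting [HasFiniteBiproducts 𝒯] (ang : Angulation 𝒯 S d) (X : 𝒯) : Prop :=
  IsRigid S X ∧ ∀ Y : 𝒯, ∃ A ∈ ang.dist, Nonempty (A.chain.obj' (d + 1) ≅ Y) ∧
    ∀ i : ℕ, ∀ _ : i ≤ d, inAdd X (A.chain.obj' i (by omega))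

end Angulated

section CY

variable (k : Type v) [Field k] (𝒯) [Preadditive 𝒯] [Linear k 𝒯] (S : 𝒯 ≌ 𝒯)

/-- The `2d`-Calabi–Yau property of `𝒯` (where `S = Σ^d`, so `Σ^{2d} = S ∘ S`):
a family of `k`-linear isomorphisms `𝒯(X,Y) ≅ D 𝒯(Y, Σ^{2d} X)`, natural in both
variables, where `D = Hom_k(-,k)` is the `k`-linear duality. -/
structure CalabiYau where
  equiv : ∀ X Y : 𝒯, (X ⟶ Y) ≃ₗ[k] Module.Dual k (Y ⟶ S.functor.obj (S.functor.obj X))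
  natLeft : ∀ {X X' Y : 𝒯} (f : X' ⟶ X) (h : X ⟶ Y) (g : Y ⟶ S.functor.obj (S.functor.obj X')),
    equiv X' Y (f ≫ h) g = equiv X Y h (g ≫ S.functor.map (S.functor.map f))
  natRight : ∀ {X Y Y' : 𝒯} (h : X ⟶ Y) (g' : Y ⟶ Y') (g : Y' ⟶ S.functor.obj (S.functor.obj X)),
    equiv X Y' (h ≫ g') g = equiv X Y h (g' ≫ g)

end CY

end MaxTauRigid

/-!
The inclusion `add X ⊆ X^⊥` is `d`-rigidity. Conversely, if `Ext^d(X, Y) = 0`, take the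
`(d+2)`-angle `X_d → ⋯ → X_0 → Y → Σ^d X_d` with `X_i ∈ add X`. The `2d`-Calabi–Yau
duality `𝒯(Y, Σ^d X_d) ≅ D 𝒯(X_d, Σ^d Y) = 0` kills the last morphism, so by exactness
`𝟙_Y` factors through `X_0 → Y`, making `Y` a summand of `X_0 ∈ add X`.
-/

namespace MaxTauRigid

variable {𝒯 : Type u} [Category.{v} 𝒯] [Preadditive 𝒯]

section Additive

variable [HasFiniteBiproducts 𝒯]

lemma inAdd.of_retract {X Y Z : 𝒯} (h : inAdd X Z) (i : Y ⟶ Z) (p : Z ⟶ Y)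
    (hip : i ≫ p = 𝟙 Y) : inAdd X Y := by
  obtain ⟨n, ι, π, hιπ⟩ := h
  exact ⟨n, i ≫ ι, π ≫ p, by simp [reassoc_of% hιπ, hip]⟩

lemma inAdd.of_iso {X Y Z : 𝒯} (h : inAdd X Z) (e : Y ≅ Z) : inAdd X Y :=
  h.of_retract e.hom e.inv e.hom_inv_id

variable {S : 𝒯 ≌ 𝒯}

lemma extVanish.of_inAdd_left {X Y Z : 𝒯} (hv : extVanish S X Y) (h : inAdd X Z) :
    extVanish S Z Y := by
  obtain ⟨n, ι, π, hιπ⟩ := h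
  intro g
  have hπg : π ≫ g = 0 := biproduct.hom_ext' _ _ fun j => by
    rw [comp_zero, ← Category.assoc]
    exact hv _
  rw [← Category.id_comp g, ← hιπ, Category.assoc, hπg, comp_zero]

lemma extVanish.of_iso_right {X Y Z : 𝒯} (hv : extVanish S X Y) (e : Z ≅ Y) :
    extVanish S X Z := fun f => by
  rw [← cancel_mono (S.functor.map e.hom), hv (f ≫ _), zero_comp]

lemma extVanish.of_inAdd_right {X Y Z : 𝒯} (hv : extVanish S X Z) (h : inAdd Z Y) :
    extVanish S X Y := by
  have := preservesBinaryBiproducts_of_preservesBinaryCoproducts S.functor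
  have := S.functor.additive_of_preservesBinaryBiproducts
  obtain ⟨n, ι, π, hιπ⟩ := h
  intro f
  have hf : f = ∑ j : Fin n, (f ≫ S.functor.map (ι ≫ biproduct.π (fun _ => Z) j)) ≫
      S.functor.map (biproduct.ι (fun _ => Z) j ≫ π) := by
    conv_lhs => rw [← Category.comp_id f, ← S.functor.map_id, ← hιπ, ← Category.id_comp π,
      ← biproduct.total]
    simp only [Preadditive.sum_comp, Preadditive.comp_sum, Functor.map_sum, Category.assoc,
      Functor.map_comp]
  rw [hf]
  exact Finset.sum_eq_zero fun j _ => by rw [hv (f ≫ _), zero_comp]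

end Additive

lemma CalabiYau.extVanish_symm {k : Type v} [Field k] [Linear k 𝒯] {S : 𝒯 ≌ 𝒯}
    (cy : CalabiYau 𝒯 k S) {X Y : 𝒯} (h : extVanish S X Y) : extVanish S Y X := by
  intro f
  apply (cy.equiv Y (S.functor.obj X)).injective
  ext g
  obtain ⟨g', rfl⟩ := S.functor.map_surjective g
  rw [h g', Functor.map_zero, map_zero, map_zero]

lemma Angulation.exists_section_of_wrap_eq_zero {S : 𝒯 ≌ 𝒯} {d : ℕ} (ang : Angulation 𝒯 S d)
    {A : Angle 𝒯 S d} (hA : A ∈ ang.dist) (hw : A.wrap = 0) :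
    ∃ s : A.chain.obj' (d + 1) ⟶ A.chain.obj' d, s ≫ A.chain.map' d (d + 1) = 𝟙 _ :=
  ang.exact_last A hA _ (𝟙 _) (by rw [hw, Limits.comp_zero])

end MaxTauRigid

open MaxTauRigid CategoryTheory Limits in
theorem statement0_general
    (k : Type v) [Field k]
    (𝒯 : Type u) [Category.{v} 𝒯] [Preadditive 𝒯] [CategoryTheory.Linear k 𝒯]
    [HasFiniteBiproducts 𝒯]
    (d : ℕ)
    (S : 𝒯 ≌ 𝒯)
    (ang : Angulation 𝒯 S d) (cy : CalabiYau 𝒯 k S)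
    (X : 𝒯) (hX : IsClusterTilting ang X) :
    IsSelfPerp S X := by
  intro Y
  refine ⟨extVanish.of_inAdd_right hX.1, fun hv => ?_⟩
  obtain ⟨A, hA, ⟨e⟩, hadd⟩ := hX.2 Y
  have hwrap : A.wrap = 0 :=
    cy.extVanish_symm ((hv.of_inAdd_left (hadd 0 (Nat.zero_le d))).of_iso_right e) A.wrap
  obtain ⟨s, hs⟩ := ang.exists_section_of_wrap_eq_zero hA hwrap
  exact ((hadd d le_rfl).of_retract s _ hs).of_iso e.symm

open MaxTauRigid CategoryTheory Limits in
/-- first implication of Theorem A / Theorem 1.1(i):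
in the setting of the paper, if `X` is an Oppermann–Thomas cluster tilting object of `𝒯`,
then `X` is `d`-self-perpendicular, i.e. `add X = { Y ∈ 𝒯 | Ext^d_𝒯(X,Y) = 0 }`. -/
theorem statement0
    (k : Type v) [Field k] [IsAlgClosed k]
    (𝒯 : Type u) [Category.{v} 𝒯] [Preadditive 𝒯] [CategoryTheory.Linear k 𝒯]
    [HasFiniteBiproducts 𝒯] [IsIdempotentComplete 𝒯]
    [homFinite : ∀ X Y : 𝒯, FiniteDimensional k (X ⟶ Y)]
    (d : ℕ) (hd : 1 ≤ d)
    (S : 𝒯 ≌ 𝒯) [S.functor.Additive] [S.functor.Linear k]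
    (ang : Angulation 𝒯 S d) (cy : CalabiYau 𝒯 k S)
    (X : 𝒯) (hX : IsClusterTilting ang X) :
    IsSelfPerp S X :=
  statement0_general k 𝒯 d S ang cy X hX
end

section
/- Let X ∈ 𝒯 be d-self-perpendicular. Then X is maximal d-rigid, i.e. add X = { Y ∈ 𝒯 : Ext^d_𝒯(X ⊕ Y, X ⊕ Y) = 0 }; in particular X is d-rigid. -/
/-!
Common setting (Setup 0.8 of the paper): `k` is an algebraically closed field,
`𝒯` a `k`-linear, Hom-finite, `(d+2)`-angulated category with split idempotents,
`d`-suspension functor `Σ^d` (denoted `S` below, an auto-equivalence), which is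
`2d`-Calabi–Yau.  We write `Ext^d_𝒯(X,Y) = 𝒯(X, Σ^d Y)`.
-/

open CategoryTheory Limits

universe v u

namespace MaxTauRigid

variable {𝒯 : Type u} [Category.{v} 𝒯] [Preadditive 𝒯] [HasFiniteBiproducts 𝒯]

lemma inAdd_self (X : 𝒯) : inAdd X X :=
  ⟨1, biproduct.ι (fun _ : Fin 1 => X) 0, biproduct.π _ 0, biproduct.ι_π_self _ 0⟩

/-- The two retractions glue along `⨁_{Fin (n + m)} X = ⨁_{Fin n} X ⊞ ⨁_{Fin m} X`. -/
lemma inAdd_biprod {X Y Z : 𝒯} (hY : inAdd X Y) (hZ : inAdd X Z) : inAdd X (Y ⊞ Z) := by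
  obtain ⟨n, ιY, πY, hY⟩ := hY
  obtain ⟨m, ιZ, πZ, hZ⟩ := hZ
  refine ⟨n + m,
    biproduct.lift (Fin.addCases
      (fun i => biprod.fst ≫ ιY ≫ biproduct.π _ i)
      (fun i => biprod.snd ≫ ιZ ≫ biproduct.π _ i)),
    biproduct.desc (Fin.addCases
      (fun i => biproduct.ι (fun _ => X) i ≫ πY ≫ biprod.inl)
      (fun i => biproduct.ι (fun _ => X) i ≫ πZ ≫ biprod.inr)),
    ?_⟩
  have hYsum : (∑ i : Fin n, biprod.fst ≫ ιY ≫ biproduct.π (fun _ => X) i ≫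
      biproduct.ι (fun _ => X) i ≫ πY ≫ biprod.inl : Y ⊞ Z ⟶ Y ⊞ Z) =
        biprod.fst ≫ biprod.inl := by
    simp only [← Preadditive.comp_sum, ← Category.assoc (biproduct.π _ _),
      ← Preadditive.sum_comp, biproduct.total, Category.id_comp, reassoc_of% hY]
  have hZsum : (∑ i : Fin m, biprod.snd ≫ ιZ ≫ biproduct.π (fun _ => X) i ≫
      biproduct.ι (fun _ => X) i ≫ πZ ≫ biprod.inr : Y ⊞ Z ⟶ Y ⊞ Z) =
        biprod.snd ≫ biprod.inr := by
    simp only [← Preadditive.comp_sum, ← Category.assoc (biproduct.π _ _),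
      ← Preadditive.sum_comp, biproduct.total, Category.id_comp, reassoc_of% hZ]
  rw [biproduct.lift_desc, Fin.sum_univ_add, ← biprod.total]
  simpa only [Fin.addCases_left, Fin.addCases_right, Category.assoc] using
    congrArg₂ (· + ·) hYsum hZsum

variable (S : 𝒯 ≌ 𝒯)

lemma extVanish_of_inAdd {X Y Z : 𝒯} (h : inAdd X Y) (hXZ : extVanish S X Z) :
    extVanish S Y Z := by
  obtain ⟨n, ι, π, hιπ⟩ := h
  intro f
  have hπf : π ≫ f = 0 := biproduct.hom_ext' _ _ fun j => by
    rw [← Category.assoc, comp_zero]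
    exact hXZ _
  calc f = ι ≫ π ≫ f := by rw [← Category.assoc, hιπ, Category.id_comp]
    _ = 0 := by rw [hπf, comp_zero]

/-- `Ext^d(X, Y)` is the off-diagonal block `X → Σ^d Y` of `Ext^d(X ⊕ Y, X ⊕ Y)`. -/
lemma extVanish_of_extVanish_biprod {X Y : 𝒯} (h : extVanish S (X ⊞ Y) (X ⊞ Y)) :
    extVanish S X Y := fun f =>
  calc f = biprod.inl ≫ (biprod.fst ≫ f ≫ S.functor.map biprod.inr) ≫
        S.functor.map (biprod.snd : X ⊞ Y ⟶ Y) := by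
          rw [Category.assoc, Category.assoc, ← Functor.map_comp, biprod.inr_snd,
            S.functor.map_id, Category.comp_id, biprod.inl_fst_assoc]
    _ = 0 := by rw [h (biprod.fst ≫ f ≫ S.functor.map biprod.inr), zero_comp, comp_zero]

end MaxTauRigid

open MaxTauRigid CategoryTheory Limits in
theorem statement1_general
    (𝒯 : Type u) [Category.{v} 𝒯] [Preadditive 𝒯]
    [HasFiniteBiproducts 𝒯]
    (S : 𝒯 ≌ 𝒯)
    (X : 𝒯) (hX : IsSelfPerp S X) :
    IsMaxRigid S X ∧ IsRigid S X := by
  refine ⟨fun Y => ⟨fun hY => ?_, fun h => (hX Y).mpr (extVanish_of_extVanish_biprod S h)⟩,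
    (hX X).mp (inAdd_self X)⟩
  have hXY : inAdd X (X ⊞ Y) := inAdd_biprod (inAdd_self X) hY
  exact extVanish_of_inAdd S hXY ((hX _).mp hXY)

open MaxTauRigid CategoryTheory Limits in
/-- second and third implications of Theorem A / Theorem 1.1(i):
in the setting of the paper, if `X ∈ 𝒯` is `d`-self-perpendicular then `X` is maximal
`d`-rigid, i.e. `add X = { Y ∈ 𝒯 | Ext^d_𝒯(X ⊕ Y, X ⊕ Y) = 0 }`; in particular `X` is
`d`-rigid. -/
theorem statement1
    (k : Type v) [Field k] [IsAlgClosed k]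
    (𝒯 : Type u) [Category.{v} 𝒯] [Preadditive 𝒯] [CategoryTheory.Linear k 𝒯]
    [HasFiniteBiproducts 𝒯] [IsIdempotentComplete 𝒯]
    [homFinite : ∀ X Y : 𝒯, FiniteDimensional k (X ⟶ Y)]
    (d : ℕ) (hd : 1 ≤ d)
    (S : 𝒯 ≌ 𝒯) [S.functor.Additive] [S.functor.Linear k]
    (ang : Angulation 𝒯 S d) (cy : CalabiYau 𝒯 k S)
    (X : 𝒯) (hX : IsSelfPerp S X) :
    IsMaxRigid S X ∧ IsRigid S X :=
  statement1_general 𝒯 S X hX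
end
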